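/- arXiv:1008.0095 — 5 statements merged into one kernel-verified Lean document; each statement's English description precedes it below -/
import Mathlib

section
/- Let k be a field and let I, J, L be well-ordered sets together with a map μ : I × J → L that is strictly monotone in each variable (α < α′ implies μ(α,β) < μ(α′,β) for all β, and β < β′ implies μ(α,β) < μ(α,β′) for all α). Let U be a k-vector space with an increasing exhaustive I-filtration F and V a k-vector space with an increasing exhaustive J-filtration F. For γ ∈ L define F_γ(U ⊗_k V) = Σ_{(α,β) : μ(α,β) ≤ γ} Im(F_α U ⊗_k F_β V → U ⊗_k V). Then these subspaces form an increasing exhaustive L-filtration on U ⊗_k V, and for every γ ∈ L there is a k-linear isomorphism gr_γ(U ⊗_k V) ≅ ⊕_{(α,β) : μ(α,β) = γ} (gr_α U) ⊗_k (gr_β V). -/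
open Submodule
open scoped TensorProduct DirectSum

section GradedPieces

variable {k : Type*} [Field k]

/-- The sum `Σ_{β < α} F β` of the filtration pieces strictly below `α`. -/
abbrev filtBelow {I V : Type*} [LinearOrder I] [AddCommGroup V] [Module k V]
    (F : I → Submodule k V) (α : I) : Submodule k V :=
  ⨆ β ∈ Set.Iio α, F β

/-- The associated graded piece `gr_α V = F_α V / Σ_{β < α} F_β V` of an `I`-filtered
vector space. -/
abbrev filtGr {I V : Type*} [LinearOrder I] [AddCommGroup V] [Module k V]
    (F : I → Submodule k V) (α : I) : Type _ :=
  ↥(F α) ⧸ (filtBelow F α).comap (F α).subtype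

/-- The `L`-indexed filtration on `U ⊗ V` induced by an `I`-filtration on `U`, a
`J`-filtration on `V` and a map `μ : I × J → L`:
`F_γ (U ⊗ V) = Σ_{μ(α,β) ≤ γ} Im (F_α U ⊗ F_β V → U ⊗ V)`. -/
noncomputable abbrev tensorFilt {I J L U V : Type*} [LinearOrder I] [LinearOrder J] [LinearOrder L]
    [AddCommGroup U] [Module k U] [AddCommGroup V] [Module k V]
    (μ : I × J → L) (FU : I → Submodule k U) (FV : J → Submodule k V) (γ : L) :
    Submodule k (U ⊗[k] V) :=
  ⨆ p ∈ {p : I × J | μ p ≤ γ},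
    LinearMap.range (TensorProduct.map (FU p.1).subtype (FV p.2).subtype)

end GradedPieces

/-!
Over a field every filtration indexed by a well-ordered set splits: a complement `W α` of
`Σ_{β<α} F_β` inside `F_α` is isomorphic to `gr_α`, and by well-founded induction
`F_α = ⊕_{β ≤ α} W β`. Exhaustiveness makes `U = ⊕ W_α` and `V = ⊕ W_β`, hence
`U ⊗ V = ⊕ W_α ⊗ W_β`. Since `μ` is monotone, `F_γ (U ⊗ V)` is the sum of the pieces with
`μ (α, β) ≤ γ`, so its graded piece at `γ` is the sum of those with `μ (α, β) = γ`.
-/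

section Lattice

variable {α ι : Type*} [CompleteLattice α]

theorem IsLowerSet.biSup_biSup_Iic [Preorder ι] {s : Set ι} (hs : IsLowerSet s) (f : ι → α) :
    ⨆ i ∈ s, ⨆ j ∈ Set.Iic i, f j = ⨆ i ∈ s, f i :=
  le_antisymm (iSup₂_le fun _ hi => iSup₂_le fun _ hj => le_biSup f (hs hj hi))
    (iSup₂_mono fun i _ => le_biSup f (le_refl i))

theorem iSup_biSup_Iic [Preorder ι] (f : ι → α) : ⨆ i, ⨆ j ∈ Set.Iic i, f j = ⨆ i, f i := by
  simpa using isLowerSet_univ.biSup_biSup_Iic f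

theorem iSupIndep_of_disjoint_biSup_Iio [IsModularLattice α] [IsCompactlyGenerated α]
    [LinearOrder ι] {f : ι → α} (h : ∀ i, Disjoint (f i) (⨆ j ∈ Set.Iio i, f j)) :
    iSupIndep f := by
  classical
  refine iSupIndep_iff_supIndep.mpr fun s => ?_
  induction s using Finset.induction_on_max with
  | empty => exact Finset.supIndep_empty f
  | insert i s hlt ih =>
    exact ih.insert ((h i).mono_right (Finset.sup_le fun j hj => le_biSup f (hlt j hj)))

theorem exists_iSupIndep_forall_eq_biSup_Iic [IsModularLattice α] [IsCompactlyGenerated α]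
    [ComplementedLattice α] [LinearOrder ι] [WellFoundedLT ι] {F : ι → α} (hF : Monotone F) :
    ∃ W : ι → α, iSupIndep W ∧ ∀ i, F i = ⨆ j ∈ Set.Iic i, W j := by
  have hcompl (i : ι) :
      ∃ w, Disjoint (⨆ j ∈ Set.Iio i, F j) w ∧ (⨆ j ∈ Set.Iio i, F j) ⊔ w = F i := by
    obtain ⟨w, hw⟩ := exists_isCompl (⟨⨆ j ∈ Set.Iio i, F j,
      iSup₂_le fun j hj => hF hj.le⟩ : Set.Iic (F i))
    exact ⟨w, Set.Iic.isCompl_iff.mp hw⟩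
  choose W hdisj hsup using hcompl
  have hbelow (i : ι) (h : ∀ j < i, F j = ⨆ l ∈ Set.Iic j, W l) :
      ⨆ j ∈ Set.Iio i, F j = ⨆ j ∈ Set.Iio i, W j := by
    rw [← (isLowerSet_Iio i).biSup_biSup_Iic W]
    exact biSup_congr h
  have hsplit (i : ι) : F i = ⨆ j ∈ Set.Iic i, W j := by
    induction i using WellFoundedLT.induction with
    | ind i ih => rw [← hsup i, hbelow i ih, ← Set.Iio_insert, iSup_insert, sup_comm]
  refine ⟨W, iSupIndep_of_disjoint_biSup_Iio fun i => ?_, hsplit⟩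
  rw [← hbelow i fun j _ => hsplit j]
  exact (hdisj i).symm

end Lattice

section Module

variable {R M ι : Type*} [Ring R] [AddCommGroup M] [Module R M]

theorem Submodule.isCompl_comap_subtype_of_disjoint_of_sup_eq {A B C : Submodule R M}
    (hBC : Disjoint B C) (hA : B ⊔ C = A) : IsCompl (B.comap A.subtype) (C.comap A.subtype) := by
  subst hA
  rw [(B ⊔ C).mapIic.isCompl_iff, Set.Iic.isCompl_iff]
  simpa [Submodule.map_comap_subtype] using hBC

noncomputable def iSupIndep.directSumEquivBiSup {G : ι → Submodule R M} (hG : iSupIndep G)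
    (s : Set ι) : (⨁ i : s, G i) ≃ₗ[R] ↥(⨆ i ∈ s, G i) := by
  classical
  exact (LinearEquiv.ofInjective _ (hG.comp Subtype.val_injective).dfinsupp_lsum_injective).trans
    (LinearEquiv.ofEq _ _ (by rw [← iSup_eq_range_dfinsupp_lsum, iSup_subtype']; rfl))

theorem DirectSum.iSupIndep_range_lof [DecidableEq ι] (N : ι → Type*) [∀ i, AddCommGroup (N i)]
    [∀ i, Module R (N i)] : iSupIndep fun i => LinearMap.range (DirectSum.lof R ι N i) := by
  intro i
  rw [disjoint_def]
  rintro _ ⟨m, rfl⟩ hm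
  have hker : ⨆ (j) (_ : j ≠ i), LinearMap.range (DirectSum.lof R ι N j) ≤
      LinearMap.ker (DirectSum.component R ι N i) :=
    iSup₂_le fun j hj => by
      rintro _ ⟨n, rfl⟩
      simp [DirectSum.component.of, hj]
  simp [show m = 0 by simpa using hker hm]

end Module

section Graded

variable {k M ι L : Type*} [Field k] [AddCommGroup M] [Module k M]

theorem nonempty_filtGr_equiv_biSup [LinearOrder L] {G : ι → Submodule k M} (hG : iSupIndep G)
    (μ : ι → L) {F : L → Submodule k M} (hF : ∀ γ, F γ = ⨆ q ∈ {q | μ q ≤ γ}, G q) (γ : L) :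
    Nonempty (filtGr F γ ≃ₗ[k] ↥(⨆ q ∈ {q | μ q = γ}, G q)) := by
  obtain rfl : F = _ := funext hF
  have hbelow : filtBelow (fun γ => ⨆ q ∈ {q | μ q ≤ γ}, G q) γ = ⨆ q ∈ {q | μ q < γ}, G q :=
    le_antisymm (iSup₂_le fun _ hγ' => biSup_mono fun _ hq => lt_of_le_of_lt hq hγ')
      (iSup₂_le fun q hq => le_iSup₂_of_le (μ q) hq (le_biSup G le_rfl))
  have hsup : (⨆ q ∈ {q | μ q < γ}, G q) ⊔ ⨆ q ∈ {q | μ q = γ}, G q =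
      ⨆ q ∈ {q | μ q ≤ γ}, G q := by
    rw [← iSup_union]
    simp only [← Set.ofPred_or, ← le_iff_lt_or_eq]
  have hdisj : Disjoint (⨆ q ∈ {q | μ q < γ}, G q) (⨆ q ∈ {q | μ q = γ}, G q) :=
    hG.disjoint_biSup_biSup (Set.disjoint_left.mpr fun _ hlt heq => hlt.ne heq)
  exact ⟨(quotEquivOfEq _ _ (by rw [hbelow])).trans
    ((quotientEquivOfIsCompl _ _ (isCompl_comap_subtype_of_disjoint_of_sup_eq hdisj hsup)).trans
      (comapSubtypeEquivOfLe (hsup ▸ le_sup_right)))⟩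

theorem nonempty_filtGr_equiv_of_eq_biSup_Iic [LinearOrder ι] {W : ι → Submodule k M}
    (hW : iSupIndep W) {F : ι → Submodule k M} (hF : ∀ i, F i = ⨆ j ∈ Set.Iic i, W j) (i : ι) :
    Nonempty (filtGr F i ≃ₗ[k] W i) := by
  obtain ⟨e⟩ := nonempty_filtGr_equiv_biSup hW id hF i
  exact ⟨e.trans (LinearEquiv.ofEq _ _ (by simp))⟩

end Graded

section Tensor

open TensorProduct

variable {R U V ι κ : Type*} [CommRing R] [AddCommGroup U] [Module R U] [AddCommGroup V]
  [Module R V]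

theorem DirectSum.IsInternal.iSupIndep_range_mapIncl [DecidableEq ι] [DecidableEq κ]
    {P : ι → Submodule R U} {Q : κ → Submodule R V} (hP : DirectSum.IsInternal P)
    (hQ : DirectSum.IsInternal Q) :
    iSupIndep fun p : ι × κ => LinearMap.range (mapIncl (P p.1) (Q p.2)) := by
  let Ψ := (TensorProduct.directSum R R (fun i => P i) (fun j => Q j)).symm ≪≫ₗ
    TensorProduct.congr (.ofBijective (DirectSum.coeLinearMap P) hP)
      (.ofBijective (DirectSum.coeLinearMap Q) hQ)
  have hΨ (p : ι × κ) : Ψ.toLinearMap ∘ₗ DirectSum.lof R _ _ p = mapIncl (P p.1) (Q p.2) := by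
    obtain ⟨i, j⟩ := p
    refine TensorProduct.ext' fun u v => ?_
    simp only [Ψ, LinearMap.comp_apply, LinearEquiv.coe_coe, LinearEquiv.trans_apply,
      directSum_symm_lof_tmul]
    exact congrArg₂ (· ⊗ₜ ·) (DirectSum.coeLinearMap_of P i u) (DirectSum.coeLinearMap_of Q j v)
  convert Ψ.toLinearMap.iSupIndep_map Ψ.injective (DirectSum.iSupIndep_range_lof _) using 2 with p
  rw [← LinearMap.range_comp, hΨ]

theorem TensorProduct.range_mapIncl_biSup_biSup (P : ι → Submodule R U) (Q : κ → Submodule R V)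
    (s : Set ι) (t : Set κ) :
    LinearMap.range (mapIncl (⨆ i ∈ s, P i) (⨆ j ∈ t, Q j)) =
      ⨆ p ∈ s ×ˢ t, LinearMap.range (mapIncl (P p.1) (Q p.2)) := by
  simp only [range_mapIncl, map₂_iSup_left, map₂_iSup_right, biSup_prod]
  exact iSup₂_comm _

end Tensor

section TensorFilt

open TensorProduct

variable {k I J L U V : Type*} [Field k] [LinearOrder I] [LinearOrder J] [LinearOrder L]
  [AddCommGroup U] [Module k U] [AddCommGroup V] [Module k V]

theorem tensorFilt_mono (μ : I × J → L) (FU : I → Submodule k U) (FV : J → Submodule k V) :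
    Monotone (tensorFilt μ FU FV) :=
  fun _ _ h => biSup_mono fun _ hp => le_trans hp h

theorem iSup_tensorFilt_eq_top (μ : I × J → L) {FU : I → Submodule k U} {FV : J → Submodule k V}
    (hU : ⨆ α, FU α = ⊤) (hV : ⨆ β, FV β = ⊤) : ⨆ γ, tensorFilt μ FU FV γ = ⊤ := by
  rw [eq_top_iff, ← map₂_mk_top_top_eq_top, ← hU, ← hV, map₂_iSup_left]
  refine iSup_le fun α => ?_
  rw [map₂_iSup_right]
  refine iSup_le fun β => ?_
  rw [← range_mapIncl]
  exact le_iSup_of_le (μ (α, β)) (le_iSup₂_of_le (α, β) (le_refl _) le_rfl)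

theorem tensorFilt_eq_biSup_of_eq_biSup_Iic {μ : I × J → L} (hμ : Monotone μ)
    {FU WU : I → Submodule k U} {FV WV : J → Submodule k V}
    (hU : ∀ α, FU α = ⨆ a ∈ Set.Iic α, WU a) (hV : ∀ β, FV β = ⨆ b ∈ Set.Iic β, WV b) (γ : L) :
    tensorFilt μ FU FV γ = ⨆ q ∈ {q | μ q ≤ γ}, LinearMap.range (mapIncl (WU q.1) (WV q.2)) := by
  have hpiece (p : I × J) : LinearMap.range (mapIncl (FU p.1) (FV p.2)) =
      ⨆ q ∈ Set.Iic p, LinearMap.range (mapIncl (WU q.1) (WV q.2)) := by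
    rw [hU, hV, range_mapIncl_biSup_biSup, Set.Iic_prod_Iic]
  simp only [tensorFilt, hpiece]
  exact ((isLowerSet_Iic γ).preimage hμ).biSup_biSup_Iic _

end TensorFilt

theorem tensor_filtration_gr_iso_general
    {k I J L U V : Type*} [Field k]
    [LinearOrder I] [WellFoundedLT I] [LinearOrder J] [WellFoundedLT J]
    [LinearOrder L]
    [AddCommGroup U] [Module k U] [AddCommGroup V] [Module k V]
    (μ : I × J → L)
    (hμI : ∀ β : J, StrictMono fun α : I => μ (α, β))
    (hμJ : ∀ α : I, StrictMono fun β : J => μ (α, β))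
    (FU : I → Submodule k U) (FV : J → Submodule k V)
    (hUmono : Monotone FU) (hVmono : Monotone FV)
    (hUexh : ⨆ α, FU α = ⊤) (hVexh : ⨆ β, FV β = ⊤) :
    Monotone (tensorFilt μ FU FV) ∧
    (⨆ γ, tensorFilt μ FU FV γ = ⊤) ∧
    ∀ γ : L, Nonempty
      (filtGr (tensorFilt μ FU FV) γ ≃ₗ[k]
        ⨁ p : {p : I × J // μ p = γ}, (filtGr FU p.1.1 ⊗[k] filtGr FV p.1.2)) := by
  classical
  refine ⟨tensorFilt_mono μ FU FV, iSup_tensorFilt_eq_top μ hUexh hVexh, fun γ => ?_⟩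
  have hμ : Monotone μ := fun p q h =>
    ((hμI p.2).monotone h.1).trans ((hμJ q.1).monotone h.2)
  obtain ⟨WU, hWU, hFU⟩ := exists_iSupIndep_forall_eq_biSup_Iic hUmono
  obtain ⟨WV, hWV, hFV⟩ := exists_iSupIndep_forall_eq_biSup_Iic hVmono
  have hUint : DirectSum.IsInternal WU :=
    DirectSum.isInternal_submodule_of_iSupIndep_of_iSup_eq_top hWU (by
      rw [← iSup_biSup_Iic, ← iSup_congr hFU, hUexh])
  have hVint : DirectSum.IsInternal WV :=
    DirectSum.isInternal_submodule_of_iSupIndep_of_iSup_eq_top hWV (by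
      rw [← iSup_biSup_Iic, ← iSup_congr hFV, hVexh])
  have hG := hUint.iSupIndep_range_mapIncl hVint
  obtain ⟨e⟩ :=
    nonempty_filtGr_equiv_biSup hG μ (tensorFilt_eq_biSup_of_eq_biSup_Iic hμ hFU hFV) γ
  let eU (α : I) := (nonempty_filtGr_equiv_of_eq_biSup_Iic hWU hFU α).some
  let eV (β : J) := (nonempty_filtGr_equiv_of_eq_biSup_Iic hWV hFV β).some
  exact ⟨e ≪≫ₗ (hG.directSumEquivBiSup _).symm ≪≫ₗ DFinsupp.mapRange.linearEquiv fun q =>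
    (LinearEquiv.ofInjective _ (Module.Flat.tensorProduct_mapIncl_injective_of_right _ _)).symm ≪≫ₗ
      TensorProduct.congr (eU q.1.1).symm (eV q.1.2).symm⟩

/-- Let `U` be `I`-filtered and `V` be `J`-filtered vector spaces over `k`
(increasing exhaustive filtrations, `I`, `J`, `L` well-ordered) and let `μ : I × J → L`
be strictly monotone in each variable.  Then the subspaces
`F_γ(U ⊗ V) = Σ_{μ(α,β) ≤ γ} Im(F_α U ⊗ F_β V → U ⊗ V)` form an increasing exhaustive
`L`-filtration of `U ⊗ V`, and for every `γ` there is a `k`-linear isomorphism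
`gr_γ (U ⊗ V) ≅ ⊕_{μ(α,β) = γ} gr_α U ⊗ gr_β V`. -/
theorem tensor_filtration_gr_iso
    {k I J L U V : Type*} [Field k]
    [LinearOrder I] [WellFoundedLT I] [LinearOrder J] [WellFoundedLT J]
    [LinearOrder L] [WellFoundedLT L]
    [AddCommGroup U] [Module k U] [AddCommGroup V] [Module k V]
    (μ : I × J → L)
    (hμI : ∀ β : J, StrictMono fun α : I => μ (α, β))
    (hμJ : ∀ α : I, StrictMono fun β : J => μ (α, β))
    (FU : I → Submodule k U) (FV : J → Submodule k V)
    (hUmono : Monotone FU) (hVmono : Monotone FV)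
    (hUexh : ⨆ α, FU α = ⊤) (hVexh : ⨆ β, FV β = ⊤) :
    Monotone (tensorFilt μ FU FV) ∧
    (⨆ γ, tensorFilt μ FU FV γ = ⊤) ∧
    ∀ γ : L, Nonempty
      (filtGr (tensorFilt μ FU FV) γ ≃ₗ[k]
        ⨁ p : {p : I × J // μ p = γ}, (filtGr FU p.1.1 ⊗[k] filtGr FV p.1.2)) :=
  tensor_filtration_gr_iso_general μ hμI hμJ FU FV hUmono hVmono hUexh hVexh
end

section
/- Let k be a field and (W, ω) a symplectic vector space over k. Suppose W is the internal direct sum of finitely many subspaces W₁, …, W_n that are pairwise orthogonal (ω(W_i, W_j) = 0 for i ≠ j) and such that the restriction of ω to each W_i is nondegenerate. Let L ⊆ W be a Lagrangian subspace. Then there exist subspaces M_i ⊆ W_i, each Lagrangian in (W_i, ω|_{W_i}), such that M₁ + ⋯ + M_n is a complement to L in W, i.e., L ∩ (M₁ + ⋯ + M_n) = 0 and L + (M₁ + ⋯ + M_n) = W. -/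
/-!
Among families of isotropic subspaces `M i ≤ W i` whose sum `N` meets `L` only in `0`, choose one
with `N` maximal. By maximality every vector of `W i` orthogonal to `M i` already lies in `L + N`;
since the `W i` are pairwise orthogonal and span `W`, this gives `N^⊥ ≤ L + N`. Taking orthogonals,
`(L + N)^⊥ ≤ L^⊥ ∩ N^⊥^⊥ = L ∩ N = 0`, so `L + N = W`. An isotropic complement of a Lagrangian is
Lagrangian, and `N^⊥ = N` cuts down to `M i^⊥ ∩ W i = M i` because the `W i` are orthogonal and
independent.
-/

/-- The orthogonal complement `{x | ω(x,u) = 0 for all u ∈ U}` of a subspace `U` with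
respect to a bilinear form `ω`. -/
def bilinOrth {k W : Type*} [Field k] [AddCommGroup W] [Module k W]
    (ω : W →ₗ[k] W →ₗ[k] k) (U : Submodule k W) : Submodule k W where
  carrier := {x : W | ∀ u ∈ U, ω x u = 0}
  zero_mem' := by intro u _; simp
  add_mem' := by
    intro a b ha hb u hu
    simp [ha u hu, hb u hu]
  smul_mem' := by
    intro c x hx u hu
    simp [hx u hu]

open LinearMap (BilinForm)
open LinearMap.BilinForm Submodule

lemma iSup_update_sup {α ι : Type*} [CompleteLattice α] [DecidableEq ι] (f : ι → α) (i : ι)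
    (a : α) : ⨆ j, Function.update f i (f i ⊔ a) j = (⨆ j, f j) ⊔ a := by
  refine le_antisymm (iSup_le fun j => ?_) (sup_le (iSup_mono fun j => ?_) ?_)
  · rcases eq_or_ne j i with rfl | hj
    · simpa using sup_le_sup_right (le_iSup f j) a
    · simpa [hj] using le_sup_of_le_left (le_iSup f j)
  · rcases eq_or_ne j i with rfl | hj
    · simp
    · simp [hj]
  · exact le_iSup_of_le i (by simp)

lemma iSupIndep.inf_iSup_of_le {α ι : Type*} [CompleteLattice α] [IsModularLattice α]
    {t s : ι → α} (ht : iSupIndep t) (hst : ∀ i, s i ≤ t i) (i : ι) :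
    t i ⊓ ⨆ j, s j = s i := by
  have hdisj : t i ⊓ ⨆ (j) (_ : j ≠ i), s j = ⊥ :=
    ((ht i).mono_right (iSup₂_mono fun j _ => hst j)).eq_bot
  rw [iSup_split_single s i, inf_comm, sup_inf_assoc_of_le _ (hst i), inf_comm, hdisj, sup_bot_eq]

namespace LinearMap.BilinForm

section CommRing

variable {R V ι : Type*} [CommRing R] [AddCommGroup V] [Module R V] {B : BilinForm R V}

lemma orthogonal_iSup (M : ι → Submodule R V) :
    B.orthogonal (⨆ i, M i) = ⨅ i, B.orthogonal (M i) := by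
  ext x
  simp only [mem_iInf]
  exact iSup_le_iff (f := M) (a := LinearMap.ker (B.flip x))

lemma orthogonal_sup (U U' : Submodule R V) :
    B.orthogonal (U ⊔ U') = B.orthogonal U ⊓ B.orthogonal U' := by
  ext x
  exact sup_le_iff (a := U) (b := U') (c := LinearMap.ker (B.flip x))

lemma le_orthogonal_comm (hB : B.IsRefl) {U U' : Submodule R V} :
    U ≤ B.orthogonal U' ↔ U' ≤ B.orthogonal U :=
  ⟨fun h _ hv _ hu => hB _ _ (h hu _ hv), fun h _ hu _ hv => hB _ _ (h hv _ hu)⟩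

lemma sup_span_singleton_le_orthogonal (hB : B.IsAlt) {U : Submodule R V}
    (hU : U ≤ B.orthogonal U) {v : V} (hv : v ∈ B.orthogonal U) :
    U ⊔ R ∙ v ≤ B.orthogonal (U ⊔ R ∙ v) := by
  have hvU : R ∙ v ≤ B.orthogonal U := (span_singleton_le_iff_mem v _).mpr hv
  have hvv : R ∙ v ≤ B.orthogonal (R ∙ v) := by
    refine (span_singleton_le_iff_mem v _).mpr fun u hu => ?_
    obtain ⟨c, rfl⟩ := mem_span_singleton.mp hu
    simp [hB.self_eq_zero v]
  rw [orthogonal_sup]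
  exact sup_le (le_inf hU ((le_orthogonal_comm hB.isRefl).mp hvU)) (le_inf hvU hvv)

lemma orthogonal_iSup_le_iSup_inf {Wi M : ι → Submodule R V} (hWtop : ⨆ i, Wi i = ⊤)
    (hWorth : Pairwise fun i j => Wi i ≤ B.orthogonal (Wi j)) (hMW : ∀ i, M i ≤ Wi i) :
    B.orthogonal (⨆ i, M i) ≤ ⨆ i, B.orthogonal (M i) ⊓ Wi i := by
  intro x hx
  obtain ⟨f, hfW, rfl⟩ := (mem_iSup_iff_exists_finsupp Wi x).mp (hWtop ▸ mem_top)
  refine Submodule.finsuppSum_mem _ _ _ _ fun i _ => mem_iSup_of_mem i ⟨fun m hm => ?_, hfW i⟩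
  -- only the `i`-th component of `x` pairs nontrivially with `M i`
  have hsum := (mem_orthogonal_iff.mp hx) m (mem_iSup_of_mem i hm)
  rwa [Finsupp.sum, map_sum, Finset.sum_eq_single i (fun j _ hji => hWorth hji (hfW j) m (hMW i hm))
    (fun hi => by simp [Finsupp.notMem_support_iff.mp hi])] at hsum

lemma orthogonal_eq_self_of_codisjoint (hnd : B.Nondegenerate) {L N : Submodule R V}
    (hL : L ≤ B.orthogonal L) (hN : N ≤ B.orthogonal N) (hLN : L ⊔ N = ⊤) :
    B.orthogonal N = N := by
  have hdisj : L ⊓ B.orthogonal N = ⊥ := by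
    rw [eq_bot_iff, ← orthogonal_top_eq_bot hnd, ← hLN, orthogonal_sup]
    exact inf_le_inf_right _ hL
  rw [← inf_top_eq (B.orthogonal N), ← hLN, sup_comm, inf_comm, sup_inf_assoc_of_le _ hN, hdisj,
    sup_bot_eq]

end CommRing

section Field

variable {K V ι : Type*} [Field K] [AddCommGroup V] [Module K V] {B : BilinForm K V}

lemma bilinOrth_eq_orthogonal (hB : B.IsRefl) (U : Submodule K V) :
    bilinOrth B U = B.orthogonal U := by
  ext x
  exact forall₂_congr fun u _ => hB.eq_iff

lemma sup_eq_top_of_orthogonal_le [FiniteDimensional K V] (hB : B.IsRefl)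
    (hnd : B.Nondegenerate) {L N : Submodule K V} (hL : B.orthogonal L = L)
    (hLN : Disjoint L N) (hN : B.orthogonal N ≤ L ⊔ N) : L ⊔ N = ⊤ := by
  have hbot : B.orthogonal (L ⊔ N) = ⊥ := by
    have hleL : B.orthogonal (L ⊔ N) ≤ L := (orthogonal_le le_sup_left).trans hL.le
    have hleN : B.orthogonal (L ⊔ N) ≤ N :=
      (orthogonal_le hN).trans (orthogonal_orthogonal hnd hB N).le
    exact eq_bot_iff.mpr ((le_inf hleL hleN).trans hLN.le_bot)
  rw [← orthogonal_orthogonal hnd hB (L ⊔ N), hbot, orthogonal_bot]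

structure IsIsotropicTransversal (B : BilinForm K V) (Wi : ι → Submodule K V)
    (L : Submodule K V) (M : ι → Submodule K V) : Prop where
  le : ∀ i, M i ≤ Wi i
  isotropic : ∀ i, M i ≤ B.orthogonal (M i)
  disjoint : Disjoint L (⨆ i, M i)

namespace IsIsotropicTransversal

variable {Wi M : ι → Submodule K V} {L : Submodule K V}

lemma bot : IsIsotropicTransversal B Wi L fun _ => ⊥ :=
  ⟨fun _ => bot_le, fun _ => bot_le, by simp⟩

lemma update [DecidableEq ι] (hB : B.IsAlt) (hM : IsIsotropicTransversal B Wi L M) {i : ι}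
    {v : V} (hvW : v ∈ Wi i) (hvM : v ∈ B.orthogonal (M i)) (hvL : v ∉ L ⊔ ⨆ j, M j) :
    IsIsotropicTransversal B Wi L (Function.update M i (M i ⊔ K ∙ v)) where
  le j := by
    rcases eq_or_ne j i with rfl | hj
    · simpa using sup_le (hM.le j) ((span_singleton_le_iff_mem v _).mpr hvW)
    · simpa [hj] using hM.le j
  isotropic j := by
    rcases eq_or_ne j i with rfl | hj
    · simpa using sup_span_singleton_le_orthogonal hB (hM.isotropic j) hvM
    · simpa [hj] using hM.isotropic j
  disjoint := by
    rw [iSup_update_sup]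
    exact hM.disjoint.disjoint_sup_right_of_disjoint_sup_left
      (disjoint_span_singleton.mpr fun h => absurd h hvL)

lemma le_orthogonal_of_ne (hM : IsIsotropicTransversal B Wi L M)
    (hWorth : Pairwise fun i j => Wi i ≤ B.orthogonal (Wi j)) {i j : ι} (hij : i ≠ j) :
    Wi i ≤ B.orthogonal (M j) :=
  (hWorth hij).trans (orthogonal_le (hM.le j))

lemma iSup_le_orthogonal (hM : IsIsotropicTransversal B Wi L M)
    (hWorth : Pairwise fun i j => Wi i ≤ B.orthogonal (Wi j)) :
    ⨆ i, M i ≤ B.orthogonal (⨆ i, M i) := by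
  rw [orthogonal_iSup]
  refine iSup_le fun i => le_iInf fun j => ?_
  rcases eq_or_ne i j with rfl | hij
  · exact hM.isotropic i
  · exact (hM.le i).trans (hM.le_orthogonal_of_ne hWorth hij)

lemma orthogonal_inf_eq (hM : IsIsotropicTransversal B Wi L M) (hW : iSupIndep Wi)
    (hWorth : Pairwise fun i j => Wi i ≤ B.orthogonal (Wi j))
    (hN : B.orthogonal (⨆ i, M i) = ⨆ i, M i) (i : ι) :
    B.orthogonal (M i) ⊓ Wi i = M i := by
  refine le_antisymm ?_ (le_inf (hM.isotropic i) (hM.le i))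
  have hle : B.orthogonal (M i) ⊓ Wi i ≤ B.orthogonal (⨆ j, M j) := by
    rw [orthogonal_iSup]
    refine le_iInf fun j => ?_
    rcases eq_or_ne i j with rfl | hij
    · exact inf_le_left
    · exact inf_le_right.trans (hM.le_orthogonal_of_ne hWorth hij)
  calc B.orthogonal (M i) ⊓ Wi i ≤ Wi i ⊓ ⨆ j, M j := le_inf inf_le_right (hle.trans hN.le)
    _ = M i := hW.inf_iSup_of_le hM.le i

lemma exists_maximal [FiniteDimensional K V] (B : BilinForm K V) (Wi : ι → Submodule K V)
    (L : Submodule K V) :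
    ∃ M, IsIsotropicTransversal B Wi L M ∧
      ∀ M', IsIsotropicTransversal B Wi L M' → ¬ (⨆ i, M i) < ⨆ i, M' i :=
  (InvImage.wf (fun M : ι → Submodule K V => ⨆ i, M i) wellFounded_gt).has_min
    {M | IsIsotropicTransversal B Wi L M} ⟨_, bot⟩

lemma orthogonal_inf_le_of_maximal (hB : B.IsAlt) (hM : IsIsotropicTransversal B Wi L M)
    (hmax : ∀ M', IsIsotropicTransversal B Wi L M' → ¬ (⨆ i, M i) < ⨆ i, M' i) (i : ι) :
    B.orthogonal (M i) ⊓ Wi i ≤ L ⊔ ⨆ j, M j := by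
  classical
  rintro v ⟨hvM, hvW⟩
  by_contra hvL
  refine hmax _ (hM.update hB hvW hvM hvL) ?_
  rw [iSup_update_sup]
  exact left_lt_sup.mpr fun h => hvL (mem_sup_right (h (mem_span_singleton_self v)))

end IsIsotropicTransversal

end Field

end LinearMap.BilinForm

theorem exists_lagrangian_complement_in_orthogonal_decomposition_general
    {k W : Type*} [Field k] [AddCommGroup W] [Module k W] [FiniteDimensional k W]
    (ω : W →ₗ[k] W →ₗ[k] k)
    (halt : ∀ x : W, ω x x = 0)
    (hnondeg : ∀ x : W, (∀ y : W, ω x y = 0) → x = 0)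
    (n : ℕ) (Wi : Fin n → Submodule k W)
    (hinternal : DirectSum.IsInternal Wi)
    (horth : ∀ i j : Fin n, i ≠ j → ∀ x ∈ Wi i, ∀ y ∈ Wi j, ω x y = 0)
    (L : Submodule k W) (hLag : L = bilinOrth ω L) :
    ∃ M : Fin n → Submodule k W,
      (∀ i, M i ≤ Wi i) ∧
      (∀ i, M i = bilinOrth ω (M i) ⊓ Wi i) ∧
      L ⊓ (⨆ i, M i) = ⊥ ∧ L ⊔ (⨆ i, M i) = ⊤ := by
  have hω : ω.IsAlt := halt
  have hnd : ω.Nondegenerate := hω.isRefl.nondegenerate_iff_separatingLeft.mpr hnondeg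
  have hWorth : Pairwise fun i j => Wi i ≤ BilinForm.orthogonal ω (Wi j) :=
    fun i j hij y hy x hx => horth j i hij.symm x hx y hy
  simp only [bilinOrth_eq_orthogonal hω.isRefl] at hLag ⊢
  obtain ⟨M, hM, hmax⟩ := IsIsotropicTransversal.exists_maximal ω Wi L
  have hNorth : BilinForm.orthogonal ω (⨆ i, M i) ≤ L ⊔ ⨆ i, M i :=
    (orthogonal_iSup_le_iSup_inf hinternal.submodule_iSup_eq_top hWorth hM.le).trans
      (iSup_le (hM.orthogonal_inf_le_of_maximal hω hmax))
  have hsup : L ⊔ ⨆ i, M i = ⊤ :=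
    sup_eq_top_of_orthogonal_le hω.isRefl hnd hLag.symm hM.disjoint hNorth
  have hN : BilinForm.orthogonal ω (⨆ i, M i) = ⨆ i, M i :=
    orthogonal_eq_self_of_codisjoint hnd hLag.le (hM.iSup_le_orthogonal hWorth) hsup
  exact ⟨M, hM.le, fun i => (hM.orthogonal_inf_eq hinternal.submodule_iSupIndep hWorth hN i).symm,
    hM.disjoint.eq_bot, hsup⟩

/-- Let `(W, ω)` be a symplectic vector space over `k` which is the internal
direct sum of pairwise orthogonal subspaces `W i` on each of which `ω` restricts to a
nondegenerate form.  Then any Lagrangian `L ⊆ W` admits a complement of the form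
`M 1 + ⋯ + M n` with each `M i` Lagrangian in `W i`. -/
theorem exists_lagrangian_complement_in_orthogonal_decomposition
    {k W : Type*} [Field k] [AddCommGroup W] [Module k W] [FiniteDimensional k W]
    (ω : W →ₗ[k] W →ₗ[k] k)
    (halt : ∀ x : W, ω x x = 0)
    (hnondeg : ∀ x : W, (∀ y : W, ω x y = 0) → x = 0)
    (n : ℕ) (Wi : Fin n → Submodule k W)
    (hinternal : DirectSum.IsInternal Wi)
    (horth : ∀ i j : Fin n, i ≠ j → ∀ x ∈ Wi i, ∀ y ∈ Wi j, ω x y = 0)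
    (hnondegi : ∀ i : Fin n, ∀ x ∈ Wi i, (∀ y ∈ Wi i, ω x y = 0) → x = 0)
    (L : Submodule k W) (hLag : L = bilinOrth ω L) :
    ∃ M : Fin n → Submodule k W,
      (∀ i, M i ≤ Wi i) ∧
      (∀ i, M i = bilinOrth ω (M i) ⊓ Wi i) ∧
      L ⊓ (⨆ i, M i) = ⊥ ∧ L ⊔ (⨆ i, M i) = ⊤ :=
  exists_lagrangian_complement_in_orthogonal_decomposition_general ω halt hnondeg n Wi hinternal
    horth L hLag
end

section
/- Let L/K be a finite Galois extension of fields and l a prime number not dividing the degree [L:K]. If a ∈ Lˣ satisfies σ(a)·a⁻¹ ∈ (Lˣ)^l for every σ ∈ Gal(L/K), then there exists b ∈ Kˣ such that a·b⁻¹ ∈ (Lˣ)^l. -/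
/-!
Taking norms, `N(a) = ∏_σ σ(a) = (∏_σ c_σ)^l · a^n` with `n = [L:K]`, so `a^n` is an `l`-th power
times an element of `K`. Since `l` is coprime to `n`, writing `1 = l u + n v` gives
`a · N(a)^(-v) = (a^u · (∏_σ c_σ)^(-v))^l`.
-/

theorem exists_mul_inv_zpow_eq_pow_of_coprime {G : Type*} [CommGroup G] {l n : ℕ}
    (hcop : l.Coprime n) {x y c : G} (hy : y = c ^ l * x ^ n) :
    ∃ v : ℤ, ∃ d : G, x * (y ^ v)⁻¹ = d ^ l := by
  have hbezout : (l : ℤ) * l.gcdA n + n * l.gcdB n = 1 := by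
    rw [← Nat.gcd_eq_gcd_ab, hcop, Nat.cast_one]
  refine ⟨l.gcdB n, x ^ l.gcdA n * c ^ (-l.gcdB n), ?_⟩
  conv_lhs => rw [← zpow_one x, ← hbezout, ← zpow_neg, hy]
  rw [← zpow_natCast, ← zpow_natCast, ← zpow_natCast]
  simp only [mul_zpow, ← zpow_mul, zpow_add, zpow_neg, mul_inv, inv_zpow]
  rw [mul_comm (c ^ _)⁻¹, mul_comm (l.gcdB n)]
  group

theorem algebraMap_norm_eq_prod_mul_pow {K L : Type*} [Field K] [Field L] [Algebra K L]
    [FiniteDimensional K L] [IsGalois K L] {a : L} (ha : a ≠ 0) :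
    algebraMap K L (Algebra.norm K a) =
      (∏ σ : L ≃ₐ[K] L, σ a * a⁻¹) * a ^ Module.finrank K L := by
  rw [Algebra.norm_eq_prod_automorphisms, Finset.prod_mul_distrib, Finset.prod_const,
    Finset.card_univ, ← Nat.card_eq_fintype_card, IsGalois.card_aut_eq_finrank, mul_assoc,
    ← mul_pow, inv_mul_cancel₀ ha, one_pow, mul_one]

/-- If `L/K` is a finite Galois extension, `l` a prime not dividing `[L:K]`,
and `a ∈ Lˣ` satisfies `σ(a)·a⁻¹ ∈ (Lˣ)^l` for every `σ ∈ Gal(L/K)`, then there is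
`b ∈ Kˣ` with `a·b⁻¹ ∈ (Lˣ)^l`. -/
theorem exists_invariant_representative_mod_lth_powers
    {K L : Type*} [Field K] [Field L] [Algebra K L] [FiniteDimensional K L] [IsGalois K L]
    (l : ℕ) (hl : l.Prime) (hdvd : ¬ l ∣ Module.finrank K L)
    (a : Lˣ) (ha : ∀ σ : L ≃ₐ[K] L, ∃ c : Lˣ, σ (a : L) * (a : L)⁻¹ = (c : L) ^ l) :
    ∃ b : Kˣ, ∃ c : Lˣ, (a : L) * (algebraMap K L (b : K))⁻¹ = (c : L) ^ l := by
  choose c hc using ha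
  set N : Kˣ := Units.map (Algebra.norm K) a
  have hN : Units.map (algebraMap K L) N = (∏ σ, c σ) ^ l * a ^ Module.finrank K L := by
    ext
    simp [N, algebraMap_norm_eq_prod_mul_pow a.ne_zero, hc, Finset.prod_pow]
  obtain ⟨v, d, hd⟩ :=
    exists_mul_inv_zpow_eq_pow_of_coprime ((Nat.Prime.coprime_iff_not_dvd hl).2 hdvd) hN
  refine ⟨N ^ v, d, ?_⟩
  simpa [← map_zpow] using congrArg Units.val hd
end

section
/- Let L/K be a finite Galois extension of fields with Galois group G = Gal(L/K), and let l be a prime number not dividing the order of G. Let c : G → Lˣ be a 1-cocycle with values in the subgroup of l-th powers: c(σ) ∈ (Lˣ)^l for all σ ∈ G, and c(στ) = c(σ)·σ(c(τ)) for all σ, τ ∈ G. Then c is a coboundary with values in the l-th powers: there exists e ∈ (Lˣ)^l such that c(σ) = σ(e)·e⁻¹ for all σ ∈ G. (In other words, H¹(Gal(L/K), (Lˣ)^l) = 0.) -/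
/-! Writing `n = |G|`, the cocycle identity multiplied over `G` shows that `c ^ n` is the
coboundary of `(∏ τ, c τ)⁻¹`, an `l`-th power when every `c τ` is one, while Hilbert 90 makes `c`
the coboundary of some `y`. With `u * n + v * l = 1`, the cocycle `c = (c ^ n) ^ u * c ^ (v * l)`
is then the coboundary of `(∏ τ, c τ)⁻¹ ^ u * y ^ (v * l)`, which is again an `l`-th power. -/

namespace groupCohomology

variable {G M : Type*} [Group G] [CommGroup M] [MulDistribMulAction G M]

variable (G) in
def mulCoboundary₁Hom : M →* G → M where
  toFun x g := g • x / x
  map_one' := by ext; simp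
  map_mul' x y := by ext g; simp only [smul_mul', Pi.mul_apply, mul_div_mul_comm]

@[simp]
theorem mulCoboundary₁Hom_apply (x : M) (g : G) : mulCoboundary₁Hom G x g = g • x / x := rfl

theorem isMulCoboundary₁_iff_exists_mulCoboundary₁Hom_eq {f : G → M} :
    IsMulCoboundary₁ f ↔ ∃ x, mulCoboundary₁Hom G x = f := by
  simp only [IsMulCoboundary₁, funext_iff, mulCoboundary₁Hom_apply]

theorem mulCoboundary₁Hom_inv_prod_eq_pow_card [Fintype G] {f : G → M}
    (hf : IsMulCocycle₁ f) : mulCoboundary₁Hom G (∏ h, f h)⁻¹ = f ^ Fintype.card G := by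
  ext g
  have hreindex : ∏ h, f (g * h) = ∏ h, f h :=
    Fintype.prod_bijective (g * ·) (Group.mulLeft_bijective g) _ _ fun _ => rfl
  simp only [hf g, Finset.prod_mul_distrib, Finset.prod_const, Finset.card_univ,
    ← Finset.smul_prod'] at hreindex
  rw [mulCoboundary₁Hom_apply, Pi.pow_apply, smul_inv', div_inv_eq_mul, inv_mul_eq_iff_eq_mul,
    hreindex]

theorem exists_pow_mulCoboundary₁Hom_eq [Fintype G] {f : G → M} (hf : IsMulCocycle₁ f)
    (hcob : IsMulCoboundary₁ f) {l : ℕ} (hl : (Fintype.card G).Coprime l)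
    (hpow : ∀ g, ∃ d, f g = d ^ l) :
    ∃ z : M, (∃ d, z = d ^ l) ∧ mulCoboundary₁Hom G z = f := by
  obtain ⟨y, hy⟩ := isMulCoboundary₁_iff_exists_mulCoboundary₁Hom_eq.mp hcob
  choose d hd using hpow
  obtain ⟨u, v, huv⟩ := Nat.isCoprime_iff_coprime.mpr hl
  have hprod : ∏ h, f h = (∏ h, d h) ^ l := by simp only [hd, Finset.prod_pow]
  refine ⟨(∏ h, f h)⁻¹ ^ u * y ^ (v * l), ⟨(∏ h, d h) ^ (-u) * y ^ v, ?_⟩, ?_⟩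
  · simp only [hprod, ← zpow_natCast, mul_zpow, ← zpow_mul, inv_zpow', neg_mul, mul_neg,
      mul_comm u]
  · calc mulCoboundary₁Hom G ((∏ h, f h)⁻¹ ^ u * y ^ (v * l))
        = (f ^ Fintype.card G) ^ u * f ^ (v * l) := by
          rw [map_mul, map_zpow, map_zpow, mulCoboundary₁Hom_inv_prod_eq_pow_card hf, hy]
      _ = f ^ (u * Fintype.card G + v * l) := by
          rw [zpow_add, mul_comm u, zpow_mul f (Fintype.card G : ℤ) u, zpow_natCast]
      _ = f := by rw [huv, zpow_one]

end groupCohomology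

open groupCohomology in
theorem onecocycle_lth_powers_is_coboundary_general
    {K L : Type*} [Field K] [Field L] [Algebra K L] [FiniteDimensional K L]
    (l : ℕ) (hl : l.Prime) (hdvd : ¬ l ∣ Nat.card (L ≃ₐ[K] L))
    (c : (L ≃ₐ[K] L) → Lˣ)
    (hpow : ∀ σ : L ≃ₐ[K] L, ∃ d : Lˣ, c σ = d ^ l)
    (hcoc : ∀ σ τ : L ≃ₐ[K] L, (c (σ * τ) : L) = (c σ : L) * σ (c τ : L)) :
    ∃ e : Lˣ, (∃ d : Lˣ, e = d ^ l) ∧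
      ∀ σ : L ≃ₐ[K] L, (c σ : L) = σ (e : L) * (e : L)⁻¹ := by
  have hcocycle : IsMulCocycle₁ c := fun σ τ => Units.ext <| by simp [hcoc, mul_comm]
  have hcop : (Fintype.card (L ≃ₐ[K] L)).Coprime l :=
    Nat.card_eq_fintype_card (α := L ≃ₐ[K] L) ▸ (hl.coprime_iff_not_dvd.mpr hdvd).symm
  obtain ⟨e, he, hce⟩ := exists_pow_mulCoboundary₁Hom_eq hcocycle
    (isMulCoboundary₁_of_isMulCocycle₁_of_aut_to_units c hcocycle) hcop hpow
  refine ⟨e, he, fun σ => ?_⟩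
  simp [← hce, div_eq_mul_inv]

/-- For a finite Galois extension `L/K` with group `G` and a prime `l` not
dividing `|G|`, every 1-cocycle `c : G → Lˣ` with values in the subgroup of `l`-th powers
is a coboundary with values in the `l`-th powers:
`H¹(Gal(L/K), (Lˣ)^l) = 0`. -/
theorem onecocycle_lth_powers_is_coboundary
    {K L : Type*} [Field K] [Field L] [Algebra K L] [FiniteDimensional K L] [IsGalois K L]
    (l : ℕ) (hl : l.Prime) (hdvd : ¬ l ∣ Nat.card (L ≃ₐ[K] L))
    (c : (L ≃ₐ[K] L) → Lˣ)
    (hpow : ∀ σ : L ≃ₐ[K] L, ∃ d : Lˣ, c σ = d ^ l)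
    (hcoc : ∀ σ τ : L ≃ₐ[K] L, (c (σ * τ) : L) = (c σ : L) * σ (c τ : L)) :
    ∃ e : Lˣ, (∃ d : Lˣ, e = d ^ l) ∧
      ∀ σ : L ≃ₐ[K] L, (c σ : L) = σ (e : L) * (e : L)⁻¹ :=
  onecocycle_lth_powers_is_coboundary_general l hl hdvd c hpow hcoc
end

section
/- Let K be a number field and T a finite set of finite places of K whose classes generate ClassGroup K. Let D be a function assigning an integer D(v) to each finite place v of K, with D(v) = 0 for all but finitely many v and D(v) = 0 for all v ∈ T. Then there exists b ∈ Kˣ such that v(b) = D(v) for every finite place v ∉ T. -/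
open IsDedekindDomain NumberField
open scoped nonZeroDivisors

/-! Write the divisor `D` as the invertible fractional ideal `I = ∏ᶠ v, v ^ D v`. Since the classes
of the primes in `T` generate the class group, `I * J` is principal, say `(b)`, for some `J` in the
subgroup generated by the primes in `T`. Such a `J` has valuation `0` at every `v ∉ T`, so
`v(b) = v(I) = D v` there. -/

namespace IsDedekindDomain.HeightOneSpectrum

open FractionalIdeal WithZero

variable {R : Type*} [CommRing R] [IsDedekindDomain R] {K : Type*} [Field K] [Algebra R K]
  [IsFractionRing R K]

theorem valuation_algebraMap_eq_exp_neg_count (v : HeightOneSpectrum R) {r : R} (hr : r ≠ 0) :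
    v.valuation K (algebraMap R K r)
      = exp (-count K v (spanSingleton R⁰ (algebraMap R K r))) := by
  have hspan : Ideal.span {r} ≠ 0 := mt Ideal.span_singleton_eq_bot.mp hr
  rw [valuation_of_algebraMap, intValuation_if_neg v hr, ← coeIdeal_span_singleton,
    count_coe K v hspan]

theorem valuation_eq_exp_neg_count (v : HeightOneSpectrum R) {x : K} (hx : x ≠ 0) :
    v.valuation K x = exp (-count K v (spanSingleton R⁰ x)) := by
  obtain ⟨a, b, hb, rfl⟩ := IsFractionRing.div_surjective R x
  have ha : a ≠ 0 := by rintro rfl; simp at hx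
  have hb : b ≠ 0 := nonZeroDivisors.ne_zero hb
  have hspan {r : R} (hr : r ≠ 0) : spanSingleton R⁰ (algebraMap R K r) ≠ 0 := by
    simpa [spanSingleton_ne_zero_iff] using hr
  rw [map_div₀, ← spanSingleton_div_spanSingleton, div_eq_mul_inv, div_eq_mul_inv,
    count_mul K v (hspan ha) (inv_ne_zero (hspan hb)), count_inv,
    valuation_algebraMap_eq_exp_neg_count v ha, valuation_algebraMap_eq_exp_neg_count v hb,
    neg_add, exp_add, exp_neg (-_)]

end IsDedekindDomain.HeightOneSpectrum

namespace FractionalIdeal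

variable {R : Type*} [CommRing R] [IsDedekindDomain R] (K : Type*) [Field K] [Algebra R K]
  [IsFractionRing R K]

noncomputable def countHom (v : HeightOneSpectrum R) :
    (FractionalIdeal R⁰ K)ˣ →* Multiplicative ℤ where
  toFun I := .ofAdd (count K v I)
  map_one' := by rw [Units.val_one, count_one, ofAdd_zero]
  map_mul' I J := by rw [Units.val_mul, count_mul K v I.ne_zero J.ne_zero, ofAdd_add]

theorem count_eq_zero_of_mem_closure {T : Set (HeightOneSpectrum R)} {v : HeightOneSpectrum R}
    (hv : v ∉ T) {J : (FractionalIdeal R⁰ K)ˣ}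
    (hJ : J ∈ Subgroup.closure
      {J | ∃ w ∈ T, ∃ hw : w.asIdeal ∈ (Ideal R)⁰, J = mk0 K ⟨w.asIdeal, hw⟩}) :
    count K v J = 0 := by
  suffices Subgroup.closure _ ≤ (countHom K v).ker from ofAdd_eq_one.mp (this hJ)
  rw [Subgroup.closure_le]
  rintro _ ⟨w, hw, -, rfl⟩
  exact ofAdd_eq_one.mpr (count_maximal_coprime K v (ne_of_mem_of_not_mem hw hv))

end FractionalIdeal

namespace ClassGroup

open FractionalIdeal

variable {R : Type*} [CommRing R] [IsDomain R] {K : Type*} [Field K] [Algebra R K]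
  [IsFractionRing R K]

theorem exists_mem_closure_mul_eq_spanSingleton {S : Set (FractionalIdeal R⁰ K)ˣ}
    (hS : Subgroup.closure (mk K '' S) = ⊤) (I : (FractionalIdeal R⁰ K)ˣ) :
    ∃ J ∈ Subgroup.closure S, ∃ x : Kˣ,
      ((I * J : (FractionalIdeal R⁰ K)ˣ) : FractionalIdeal R⁰ K) = spanSingleton R⁰ (x : K) := by
  obtain ⟨J, hJ, hJI⟩ : mk K I⁻¹ ∈ (Subgroup.closure S).map (mk K) := by
    rw [MonoidHom.map_closure, hS]
    trivial
  have hIJ : mk K (I * J) = 1 := by rw [map_mul, hJI, map_inv, mul_inv_cancel]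
  obtain ⟨x, hx⟩ := (isPrincipal_iff _).mp (mk_eq_one_iff.mp hIJ)
  have hx0 : x ≠ 0 := by
    rintro rfl
    exact (I * J).ne_zero (by rw [hx, spanSingleton_zero])
  exact ⟨J, hJ, Units.mk0 x hx0, hx⟩

end ClassGroup

namespace IsDedekindDomain

open FractionalIdeal HeightOneSpectrum

variable {R : Type*} [CommRing R] [IsDedekindDomain R] {K : Type*} [Field K] [Algebra R K]
  [IsFractionRing R K]

theorem exists_valuation_eq_exp_neg_of_closure_eq_top (T : Set (HeightOneSpectrum R))
    (hgen : Subgroup.closure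
      {c : ClassGroup R | ∃ v ∈ T, ∃ hv : v.asIdeal ∈ (Ideal R)⁰,
        c = ClassGroup.mk0 ⟨v.asIdeal, hv⟩} = ⊤)
    (D : HeightOneSpectrum R → ℤ) (hD : ∀ᶠ v in Filter.cofinite, D v = 0) :
    ∃ b : Kˣ, ∀ v ∉ T, v.valuation K (b : K) = WithZero.exp (-D v) := by
  set S := {J : (FractionalIdeal R⁰ K)ˣ | ∃ w ∈ T, ∃ hw : w.asIdeal ∈ (Ideal R)⁰,
    J = mk0 K ⟨w.asIdeal, hw⟩}
  have hS : Subgroup.closure (ClassGroup.mk K '' S) = ⊤ := by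
    convert hgen using 2
    ext c
    simp [S, ClassGroup.mk_mk0, eq_comm]
  have hI : ∏ᶠ v, (v.asIdeal : FractionalIdeal R⁰ K) ^ D v ≠ 0 :=
    finprod_induction (· ≠ 0) one_ne_zero (fun _ _ => mul_ne_zero)
      fun v => zpow_ne_zero _ (coeIdeal_ne_zero.mpr v.ne_bot)
  obtain ⟨J, hJ, b, hb⟩ := ClassGroup.exists_mem_closure_mul_eq_spanSingleton hS (Units.mk0 _ hI)
  refine ⟨b, fun v hv => ?_⟩
  rw [valuation_eq_exp_neg_count v b.ne_zero, ← hb, Units.val_mul,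
    count_mul K v (Units.ne_zero _) J.ne_zero, Units.val_mk0, count_finprod K v D hD,
    count_eq_zero_of_mem_closure K hv hJ, add_zero]

end IsDedekindDomain

theorem exists_element_with_prescribed_divisor_outside_generating_set_general
    (K : Type*) [Field K] [NumberField K]
    (T : Finset (HeightOneSpectrum (𝓞 K)))
    (hgen : Subgroup.closure
      {c : ClassGroup (𝓞 K) | ∃ v ∈ T, ∃ hv : v.asIdeal ∈ (Ideal (𝓞 K))⁰,
        c = ClassGroup.mk0 ⟨v.asIdeal, hv⟩} = ⊤)
    (D : HeightOneSpectrum (𝓞 K) → ℤ)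
    (hfin : {v : HeightOneSpectrum (𝓞 K) | D v ≠ 0}.Finite) :
    ∃ b : Kˣ, ∀ v : HeightOneSpectrum (𝓞 K), v ∉ T →
      v.valuation K (b : K)
        = ((Multiplicative.ofAdd (-D v) : Multiplicative ℤ) : WithZero (Multiplicative ℤ)) := by
  obtain ⟨b, hb⟩ := exists_valuation_eq_exp_neg_of_closure_eq_top (K := K) (T : Set _)
    (by simpa only [Finset.mem_coe] using hgen) D (Filter.eventually_cofinite.mpr hfin)
  exact ⟨b, fun v hv => hb v (Finset.mem_coe.not.mpr hv)⟩

/-- If `T` is a finite set of finite places of a number field `K` whose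
ideal classes generate the class group, then for any finitely supported integer-valued
divisor `D` vanishing on `T`, there is `b ∈ Kˣ` with `v(b) = D(v)` for all finite `v ∉ T`
(the multiplicative valuation `v.valuation b` equals `ofAdd (-D v)`). -/
theorem exists_element_with_prescribed_divisor_outside_generating_set
    (K : Type*) [Field K] [NumberField K]
    (T : Finset (HeightOneSpectrum (𝓞 K)))
    (hgen : Subgroup.closure
      {c : ClassGroup (𝓞 K) | ∃ v ∈ T, ∃ hv : v.asIdeal ∈ (Ideal (𝓞 K))⁰,
        c = ClassGroup.mk0 ⟨v.asIdeal, hv⟩} = ⊤)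
    (D : HeightOneSpectrum (𝓞 K) → ℤ)
    (hfin : {v : HeightOneSpectrum (𝓞 K) | D v ≠ 0}.Finite)
    (hT : ∀ v ∈ T, D v = 0) :
    ∃ b : Kˣ, ∀ v : HeightOneSpectrum (𝓞 K), v ∉ T →
      v.valuation K (b : K)
        = ((Multiplicative.ofAdd (-D v) : Multiplicative ℤ) : WithZero (Multiplicative ℤ)) :=
  exists_element_with_prescribed_divisor_outside_generating_set_general K T hgen D hfin
end
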